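/- arXiv:1304.7886 — 2 statements merged into one kernel-verified Lean document; each statement's English description precedes it below -/
import Mathlib

section
/- Fix R̄ > 0. The following are equivalent: (i) there is no τ ∈ D with R_i(τ) ≥ R̄ for all i = 1,...,K; (ii) there exists λ = (λ_1,...,λ_K) ∈ ℝ^K with λ_i ≥ 0 for all i such that the infimum over τ ∈ D of −Σ_{i=1}^K λ_i (R_i(τ) − R̄) is strictly positive (equivalently, there is c > 0 with Σ_{i=1}^K λ_i (R_i(τ) − R̄) ≤ −c for every τ ∈ D). -/
open Real

/-- Throughput of user `i`: `R_i(τ) = τ_i · log₂(1 + γ_i τ_0 / τ_i)` if `τ_i > 0`, else `0`. -/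
noncomputable def Rthru {K : ℕ} (γ : Fin K → ℝ) (i : Fin K) (τ : Fin (K + 1) → ℝ) : ℝ :=
  if 0 < τ i.succ then τ i.succ * Real.logb 2 (1 + γ i * τ 0 / τ i.succ) else 0

/-- Feasible set `D = {τ : τ_j ≥ 0 ∀ j, Σ_j τ_j ≤ 1}`. -/
def Dfeas (K : ℕ) : Set (Fin (K + 1) → ℝ) :=
  {τ | (∀ j, 0 ≤ τ j) ∧ ∑ j, τ j ≤ 1}

/-!
Each `R_i` is the perspective `(x, y) ↦ y · φ(x / y)` of the concave nondecreasing function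
`φ z = log₂ (1 + γ_i z)`, evaluated at `(τ_0, τ_i)`; hence `R = (R_1, …, R_K)` is concave on the
compact convex set `D`, and continuous there (at `τ_i = 0` because `y log(1 + c/y) = O(√y)`).
The set of vectors dominated by some `R(τ)` is therefore convex and closed, and infeasibility
says that `(R̄, …, R̄)` lies outside it. A strictly separating functional gives the multipliers;
they are nonnegative because the set is a lower set, and the strict gap gives `c`.
-/

open Set Filter Topology Pointwise

lemma IsCompact.isClosed_setOf_exists_le {E α : Type*} [TopologicalSpace E] [AddCommGroup α]
    [PartialOrder α] [IsOrderedAddMonoid α] [TopologicalSpace α] [IsTopologicalAddGroup α]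
    [ClosedIicTopology α] {S : Set E} {G : E → α} (hS : IsCompact S) (hG : ContinuousOn G S) :
    IsClosed {r | ∃ x ∈ S, r ≤ G x} := by
  have hA : {r | ∃ x ∈ S, r ≤ G x} = G '' S + Iic (0 : α) := by
    ext r
    simp only [mem_ofPred_eq, Set.mem_add, mem_image, mem_Iic]
    constructor
    · rintro ⟨x, hx, hr⟩
      exact ⟨G x, ⟨x, hx, rfl⟩, r - G x, sub_nonpos.2 hr, add_sub_cancel _ _⟩
    · rintro ⟨_, ⟨x, hx, rfl⟩, n, hn, rfl⟩
      exact ⟨x, hx, add_le_of_nonpos_right hn⟩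
  rw [hA]
  exact isClosed_Iic.add_left_of_isCompact (hS.image_of_continuousOn hG)

lemma ConcaveOn.convex_setOf_exists_le {E β : Type*} [AddCommMonoid E] [Module ℝ E]
    [AddCommMonoid β] [PartialOrder β] [IsOrderedAddMonoid β] [Module ℝ β] [PosSMulMono ℝ β]
    {S : Set E} {G : E → β} (hG : ConcaveOn ℝ S G) : Convex ℝ {r | ∃ x ∈ S, r ≤ G x} := by
  convert hG.convex_hypograph.linear_image (LinearMap.snd ℝ E β) using 1
  ext r
  simp

lemma IsLowerSet.map_nonneg_of_bddAbove {M : Type*} [AddCommGroup M] [PartialOrder M]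
    [IsOrderedAddMonoid M] [Module ℝ M] [PosSMulMono ℝ M] {A : Set M} (hA : IsLowerSet A)
    (hne : A.Nonempty) (f : M →ₗ[ℝ] ℝ) (hf : BddAbove (f '' A)) {e : M} (he : 0 ≤ e) :
    0 ≤ f e := by
  obtain ⟨a, ha⟩ := hne
  obtain ⟨u, hu⟩ := hf
  by_contra! hfe
  set t := (u - f a + 1) / -f e
  have ht : 0 ≤ t := div_nonneg (by linarith [hu (mem_image_of_mem f ha)]) (by linarith)
  have hle := hu (mem_image_of_mem f (hA (sub_le_self a (smul_nonneg ht he)) ha))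
  rw [map_sub, map_smul, smul_eq_mul, div_mul_eq_mul_div, div_neg, mul_div_cancel_right₀ _ hfe.ne]
    at hle
  linarith

lemma concaveOn_pi {E ι : Type*} [AddCommMonoid E] [Module ℝ E] {S : Set E} {G : E → ι → ℝ}
    (hS : Convex ℝ S) (hG : ∀ i, ConcaveOn ℝ S fun x => G x i) : ConcaveOn ℝ S G :=
  ⟨hS, fun _ hx _ hy _ _ ha hb hab i => (hG i).2 hx hy ha hb hab⟩

theorem ConcaveOn.not_exists_forall_le_iff_exists_multipliers {E ι : Type*} [Fintype ι]
    [TopologicalSpace E] [AddCommGroup E] [Module ℝ E] {S : Set E} {G : E → ι → ℝ}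
    (hG : ConcaveOn ℝ S G) (hGc : ContinuousOn G S) (hS : IsCompact S) (hne : S.Nonempty)
    (p : ι → ℝ) :
    (¬ ∃ x ∈ S, ∀ i, p i ≤ G x i) ↔
      ∃ lam : ι → ℝ, (∀ i, 0 ≤ lam i) ∧
        ∃ c : ℝ, 0 < c ∧ ∀ x ∈ S, ∑ i, lam i * (G x i - p i) ≤ -c := by
  classical
  refine ⟨fun hp => ?_, ?_⟩
  · set A := {r | ∃ x ∈ S, r ≤ G x}
    obtain ⟨f, u, hfA, hfp⟩ := geometric_hahn_banach_closed_point (s := A)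
      hG.convex_setOf_exists_le (hS.isClosed_setOf_exists_le hGc) hp
    set lam : ι → ℝ := fun i => f fun j => if i = j then 1 else 0
    have hf : ∀ r, f r = ∑ i, lam i * r i := fun r => by
      rw [← ContinuousLinearMap.coe_coe, LinearMap.pi_apply_eq_sum_univ]
      simp [lam, mul_comm]
    have hlower : IsLowerSet A := fun _ _ hle ⟨x, hx, hr⟩ => ⟨x, hx, hle.trans hr⟩
    have hbdd : BddAbove (f '' A) := ⟨u, forall_mem_image.2 fun r hr => (hfA r hr).le⟩
    refine ⟨lam, fun i => ?_, f p - u, sub_pos.2 hfp, fun x hx => ?_⟩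
    · obtain ⟨x₀, hx₀⟩ := hne
      refine hlower.map_nonneg_of_bddAbove ⟨G x₀, x₀, hx₀, le_rfl⟩ f.toLinearMap hbdd fun j => ?_
      split_ifs <;> norm_num
    · have hx := hfA _ ⟨x, hx, le_rfl⟩
      rw [hf] at hx
      rw [hf]
      simp only [mul_sub, Finset.sum_sub_distrib]
      linarith
  · rintro ⟨lam, hlam, c, hc, hsum⟩ ⟨x, hx, hle⟩
    have hnonneg : 0 ≤ ∑ i, lam i * (G x i - p i) :=
      Finset.sum_nonneg fun i _ => mul_nonneg (hlam i) (sub_nonneg.2 (hle i))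
    linarith [hsum x hx]

noncomputable def perspective (φ : ℝ → ℝ) (x y : ℝ) : ℝ :=
  if 0 < y then y * φ (x / y) else 0

section Perspective

variable {φ : ℝ → ℝ}

lemma perspective_nonneg (hφ : ∀ z, 0 ≤ z → 0 ≤ φ z) {x : ℝ} (hx : 0 ≤ x) (y : ℝ) :
    0 ≤ perspective φ x y := by
  unfold perspective
  split_ifs with hy
  · exact mul_nonneg hy.le (hφ _ (div_nonneg hx hy.le))
  · rfl

lemma perspective_mul (φ : ℝ → ℝ) {a : ℝ} (ha : 0 ≤ a) (x y : ℝ) :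
    perspective φ (a * x) (a * y) = a * perspective φ x y := by
  rcases ha.eq_or_lt with rfl | ha
  · simp [perspective]
  · simp only [perspective, mul_pos_iff_of_pos_left ha, mul_div_mul_left _ _ ha.ne']
    split_ifs <;> ring

lemma perspective_le_perspective (hφ : MonotoneOn φ (Ici 0)) {x x' : ℝ} (hx : 0 ≤ x)
    (hxx' : x ≤ x') (y : ℝ) : perspective φ x y ≤ perspective φ x' y := by
  unfold perspective
  split_ifs with hy
  · exact mul_le_mul_of_nonneg_left (hφ (div_nonneg hx hy.le)
      (div_nonneg (hx.trans hxx') hy.le) (div_le_div_of_nonneg_right hxx' hy.le)) hy.le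
  · rfl

lemma perspective_add_le (hφ : ConcaveOn ℝ (Ici 0) φ) (hφm : MonotoneOn φ (Ici 0))
    {x₁ x₂ y₁ y₂ : ℝ} (hx₁ : 0 ≤ x₁) (hx₂ : 0 ≤ x₂) (hy₁ : 0 ≤ y₁) (hy₂ : 0 ≤ y₂) :
    perspective φ x₁ y₁ + perspective φ x₂ y₂ ≤ perspective φ (x₁ + x₂) (y₁ + y₂) := by
  rcases hy₁.eq_or_lt with rfl | hy₁
  · simpa [perspective] using perspective_le_perspective hφm hx₂ (le_add_of_nonneg_left hx₁) y₂
  rcases hy₂.eq_or_lt with rfl | hy₂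
  · simpa [perspective] using perspective_le_perspective hφm hx₁ (le_add_of_nonneg_right hx₂) y₁
  have hy : 0 < y₁ + y₂ := add_pos hy₁ hy₂
  have hjensen := hφ.2 (mem_Ici.2 (div_nonneg hx₁ hy₁.le)) (mem_Ici.2 (div_nonneg hx₂ hy₂.le))
    (div_nonneg hy₁.le hy.le) (div_nonneg hy₂.le hy.le) (by field_simp)
  have hmid : y₁ / (y₁ + y₂) * (x₁ / y₁) + y₂ / (y₁ + y₂) * (x₂ / y₂) = (x₁ + x₂) / (y₁ + y₂) := by
    field_simp
  simp only [smul_eq_mul, hmid] at hjensen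
  simp only [perspective, hy₁, hy₂, hy, if_true]
  calc y₁ * φ (x₁ / y₁) + y₂ * φ (x₂ / y₂)
      = (y₁ + y₂) * (y₁ / (y₁ + y₂) * φ (x₁ / y₁) + y₂ / (y₁ + y₂) * φ (x₂ / y₂)) := by
        field_simp
    _ ≤ (y₁ + y₂) * φ ((x₁ + x₂) / (y₁ + y₂)) := mul_le_mul_of_nonneg_left hjensen hy.le

lemma concaveOn_perspective (hφ : ConcaveOn ℝ (Ici 0) φ) (hφm : MonotoneOn φ (Ici 0)) :
    ConcaveOn ℝ (Ici 0 ×ˢ Ici 0) fun v : ℝ × ℝ => perspective φ v.1 v.2 := by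
  refine ⟨(convex_Ici 0).prod (convex_Ici 0), ?_⟩
  rintro ⟨x₁, y₁⟩ ⟨hx₁, hy₁⟩ ⟨x₂, y₂⟩ ⟨hx₂, hy₂⟩ a b ha hb -
  simp only [Prod.smul_mk, Prod.mk_add_mk, smul_eq_mul, ← perspective_mul φ ha,
    ← perspective_mul φ hb]
  exact perspective_add_le hφ hφm (mul_nonneg ha hx₁) (mul_nonneg hb hx₂) (mul_nonneg ha hy₁)
    (mul_nonneg hb hy₂)

end Perspective

section LogPerspective

variable {g : ℝ}

lemma concaveOn_logb_one_add_mul (hg : 0 ≤ g) :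
    ConcaveOn ℝ (Ici 0) fun z => logb 2 (1 + g * z) := by
  refine ⟨convex_Ici 0, fun z₁ hz₁ z₂ hz₂ a b ha hb hab => ?_⟩
  have hpos : ∀ z ∈ Ici (0 : ℝ), 1 + g * z ∈ Ioi 0 := fun z hz => by
    have : 0 ≤ g * z := mul_nonneg hg hz
    exact mem_Ioi.2 (by linarith)
  have hjensen := strictConcaveOn_log_Ioi.concaveOn.2 (hpos z₁ hz₁) (hpos z₂ hz₂) ha hb hab
  have hcomb : a • (1 + g * z₁) + b • (1 + g * z₂) = 1 + g * (a • z₁ + b • z₂) := by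
    simp only [smul_eq_mul]
    linear_combination hab
  rw [hcomb] at hjensen
  simp only [smul_eq_mul, logb] at hjensen ⊢
  have hlog2 : 0 < log 2 := log_pos one_lt_two
  rw [← mul_div_assoc, ← mul_div_assoc, ← add_div]
  exact div_le_div_of_nonneg_right hjensen hlog2.le

lemma monotoneOn_logb_one_add_mul (hg : 0 ≤ g) : MonotoneOn (fun z => logb 2 (1 + g * z)) (Ici 0) :=
  fun z hz z' _ hzz' => logb_le_logb_of_le one_lt_two (by have := mul_nonneg hg hz; linarith)
    (by gcongr)

lemma perspective_logb_le_sqrt (hg : 0 ≤ g) {x y : ℝ} (hx : 0 ≤ x) (hy : 0 ≤ y) :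
    perspective (fun z => logb 2 (1 + g * z)) x y ≤ 2 / log 2 * √(y * (y + g * x)) := by
  unfold perspective
  split_ifs with hy'
  · have h1 : 0 ≤ 1 + g * (x / y) := by have := mul_nonneg hg (div_nonneg hx hy); linarith
    have hlog := log_le_rpow_div h1 one_half_pos
    rw [← sqrt_eq_rpow, div_div_eq_mul_div, div_one] at hlog
    have hsq : √(y * (y + g * x)) = y * √(1 + g * (x / y)) := by
      rw [show y * (y + g * x) = y ^ 2 * (1 + g * (x / y)) by field_simp,
        sqrt_mul (sq_nonneg y), sqrt_sq hy]
    rw [hsq]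
    simp only [logb]
    have hlog2 : 0 < log 2 := log_pos one_lt_two
    calc y * (log (1 + g * (x / y)) / log 2) = y * log (1 + g * (x / y)) / log 2 := by ring
      _ ≤ y * (√(1 + g * (x / y)) * 2) / log 2 := by gcongr
      _ = 2 / log 2 * (y * √(1 + g * (x / y))) := by ring
  · positivity

lemma continuousOn_perspective_logb (hg : 0 ≤ g) :
    ContinuousOn (fun v : ℝ × ℝ => perspective (fun z => logb 2 (1 + g * z)) v.1 v.2)
      (Ici 0 ×ˢ Ici 0) := by
  rintro ⟨x, y⟩ ⟨hx, hy⟩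
  rcases (mem_Ici.1 hy).eq_or_lt with rfl | hy
  · have hbound : Continuous fun v : ℝ × ℝ => 2 / log 2 * √(v.2 * (v.2 + g * v.1)) := by
      fun_prop
    have hlim : Tendsto (fun v : ℝ × ℝ => 2 / log 2 * √(v.2 * (v.2 + g * v.1)))
        (𝓝[Ici 0 ×ˢ Ici 0] (x, 0)) (𝓝 0) := by
      simpa using (hbound.tendsto (x, 0)).mono_left nhdsWithin_le_nhds
    have hzero : perspective (fun z => logb 2 (1 + g * z)) x 0 = 0 := if_neg (lt_irrefl 0)
    rw [ContinuousWithinAt, hzero]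
    exact squeeze_zero' (eventually_nhdsWithin_of_forall fun v hv =>
        perspective_nonneg (fun z hz => logb_nonneg one_lt_two (by nlinarith)) hv.1 _)
      (eventually_nhdsWithin_of_forall fun v hv => perspective_logb_le_sqrt hg hv.1 hv.2) hlim
  · have hxy : 0 < 1 + g * (x / y) := by have := mul_nonneg hg (div_nonneg hx hy.le); linarith
    have hcont : ContinuousAt (fun v : ℝ × ℝ => v.2 * logb 2 (1 + g * (v.1 / v.2))) (x, y) := by
      fun_prop (disch := simp [hy.ne', hxy.ne'])
    refine (hcont.congr ?_).continuousWithinAt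
    filter_upwards [continuous_snd.continuousAt.eventually (lt_mem_nhds hy)] with v hv
    exact (if_pos hv).symm

end LogPerspective

section Feasible

variable {K : ℕ}

lemma Dfeas_eq_Ici_inter (K : ℕ) : Dfeas K = Ici 0 ∩ {τ | ∑ j, τ j ≤ 1} := rfl

lemma zero_mem_Dfeas : (0 : Fin (K + 1) → ℝ) ∈ Dfeas K :=
  ⟨fun _ => le_rfl, by simp⟩

lemma convex_Dfeas (K : ℕ) : Convex ℝ (Dfeas K) := by
  refine (convex_Ici 0).inter fun a ha b hb s t hs ht hst => ?_
  have ha : ∑ j, a j ≤ 1 := ha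
  have hb : ∑ j, b j ≤ 1 := hb
  show ∑ j, (s • a + t • b) j ≤ 1
  simp only [Pi.add_apply, Pi.smul_apply, smul_eq_mul, Finset.sum_add_distrib, ← Finset.mul_sum]
  nlinarith

lemma isCompact_Dfeas (K : ℕ) : IsCompact (Dfeas K) := by
  refine (isCompact_Icc (a := 0) (b := 1)).of_isClosed_subset ?_ fun τ hτ => ⟨hτ.1, fun j => ?_⟩
  · rw [Dfeas_eq_Ici_inter]
    exact isClosed_Ici.inter (isClosed_le (by fun_prop) continuous_const)
  · exact (Finset.single_le_sum (fun k _ => hτ.1 k) (Finset.mem_univ j)).trans hτ.2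

lemma Rthru_eq_perspective (γ : Fin K → ℝ) (i : Fin K) (τ : Fin (K + 1) → ℝ) :
    Rthru γ i τ = perspective (fun z => logb 2 (1 + γ i * z)) (τ 0) (τ i.succ) := by
  simp only [Rthru, perspective, mul_div_assoc]

variable {γ : Fin K → ℝ}

lemma concaveOn_Rthru (hγ : ∀ i, 0 ≤ γ i) : ConcaveOn ℝ (Dfeas K) fun τ i => Rthru γ i τ := by
  refine concaveOn_pi (convex_Dfeas K) fun i => ?_
  have h := ((concaveOn_perspective (concaveOn_logb_one_add_mul (hγ i))
    (monotoneOn_logb_one_add_mul (hγ i))).comp_linearMap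
      ((LinearMap.proj 0).prod (LinearMap.proj i.succ))).subset
    (fun τ hτ => ⟨hτ.1 0, hτ.1 i.succ⟩) (convex_Dfeas K)
  simp only [Rthru_eq_perspective]
  exact h

lemma continuousOn_Rthru (hγ : ∀ i, 0 ≤ γ i) :
    ContinuousOn (fun τ i => Rthru γ i τ) (Dfeas K) := by
  refine continuousOn_pi.2 fun i => ?_
  simp only [Rthru_eq_perspective]
  have hproj : Continuous fun τ : Fin (K + 1) → ℝ => (τ 0, τ i.succ) := by fun_prop
  exact (continuousOn_perspective_logb (hγ i)).comp hproj.continuousOn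
    fun τ hτ => ⟨hτ.1 0, hτ.1 i.succ⟩

end Feasible

theorem stmt12_general (K : ℕ) (γ : Fin K → ℝ) (hγ : ∀ i, 0 < γ i)
    (Rbar : ℝ) :
    (¬ ∃ τ ∈ Dfeas K, ∀ i : Fin K, Rbar ≤ Rthru γ i τ) ↔
    (∃ lam : Fin K → ℝ, (∀ i, 0 ≤ lam i) ∧
      ∃ c : ℝ, 0 < c ∧ ∀ τ ∈ Dfeas K, ∑ i, lam i * (Rthru γ i τ - Rbar) ≤ -c) :=
  (concaveOn_Rthru fun i => (hγ i).le).not_exists_forall_le_iff_exists_multipliers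
    (continuousOn_Rthru fun i => (hγ i).le) (isCompact_Dfeas K) ⟨0, zero_mem_Dfeas⟩ fun _ => Rbar

/-- For `R̄ > 0`: there is no feasible `τ` with `R_i(τ) ≥ R̄` for all `i` iff there
exist nonnegative multipliers `λ` such that `inf_{τ ∈ D} −Σ λ_i (R_i(τ) − R̄) > 0`,
i.e. there is `c > 0` with `Σ λ_i (R_i(τ) − R̄) ≤ −c` for all `τ ∈ D`. -/
theorem stmt12 (K : ℕ) (hK : 1 ≤ K) (γ : Fin K → ℝ) (hγ : ∀ i, 0 < γ i)
    (Rbar : ℝ) (hRbar : 0 < Rbar) :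
    (¬ ∃ τ ∈ Dfeas K, ∀ i : Fin K, Rbar ≤ Rthru γ i τ) ↔
    (∃ lam : Fin K → ℝ, (∀ i, 0 ≤ lam i) ∧
      ∃ c : ℝ, 0 < c ∧ ∀ τ ∈ Dfeas K, ∑ i, lam i * (Rthru γ i τ - Rbar) ≤ -c) :=
  stmt12_general K γ hγ Rbar
end

section
/- Let λ_1, ..., λ_K > 0. Suppose μ > 0 and z_1, ..., z_K > 0 satisfy ln(1 + z_i) − z_i/(1 + z_i) = (μ/λ_i) · ln 2 for each i = 1,...,K, and Σ_{i=1}^K λ_i γ_i/(1 + z_i) = μ · ln 2. Define τ* ∈ ℝ^{K+1} by τ_0* = 1/(1 + Σ_{j=1}^K γ_j/z_j) and τ_i* = (γ_i/z_i)/(1 + Σ_{j=1}^K γ_j/z_j) for i = 1,...,K. Then τ* ∈ D and for every τ ∈ D one has Σ_{i=1}^K λ_i R_i(τ) ≤ Σ_{i=1}^K λ_i R_i(τ*); i.e., τ* maximizes the weighted sum-throughput over D. -/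
open Real

/-!
Each summand `τ_i log(1 + γ_i τ_0 / τ_i)` is a concave perspective function of `(τ_0, τ_i)`, so it
lies below its tangent plane along the ray `γ_i τ_0 = z_i τ_i`, with equality on that ray. The
KKT equations say exactly that the `λ`-weighted sum of these tangent planes is the linear form
`μ ln 2 · Σ_j τ_j`, which is at most `μ ln 2` on `D` and equals it at `τ*` (all of whose
coordinates lie on the rays and sum to `1`).
-/

lemma log_le_log_add_sub_div {x y : ℝ} (hx : 0 < x) (hy : 0 < y) :
    log x ≤ log y + (x - y) / y := by
  have h := log_le_sub_one_of_pos (div_pos hx hy)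
  rw [log_div hx.ne' hy.ne', div_sub_one hy.ne'] at h
  linarith

/-- The right-hand side is the tangent plane of the concave map `(s, t) ↦ t log(1 + g s / t)`
along the ray `g s = z t`. -/
lemma mul_log_one_add_div_le {g s t z : ℝ} (hgs : 0 ≤ g * s) (ht : 0 < t) (hz : 0 < 1 + z) :
    t * log (1 + g * s / t) ≤ g * s / (1 + z) + (log (1 + z) - z / (1 + z)) * t := by
  have hlog := log_le_log_add_sub_div (x := 1 + g * s / t) (by positivity) hz
  have hexpand : t * ((1 + g * s / t - (1 + z)) / (1 + z)) = g * s / (1 + z) - z / (1 + z) * t := by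
    field_simp
    ring
  have h := mul_le_mul_of_nonneg_left hlog ht.le
  rw [mul_add, hexpand] at h
  linarith

section Throughput

variable {K : ℕ} (γ : Fin K → ℝ) (i : Fin K) (τ : Fin (K + 1) → ℝ)

lemma Rthru_mul_log_two :
    Rthru γ i τ * log 2 =
      if 0 < τ i.succ then τ i.succ * log (1 + γ i * τ 0 / τ i.succ) else 0 := by
  have hlog2 : log 2 ≠ 0 := (log_pos one_lt_two).ne'
  unfold Rthru logb
  split_ifs
  · field_simp
  · simp

variable {γ i τ}

lemma Rthru_mul_log_two_le (hγ : 0 ≤ γ i) (hτ : ∀ j, 0 ≤ τ j) {z : ℝ} (hz : 0 < 1 + z) :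
    Rthru γ i τ * log 2 ≤
      γ i * τ 0 / (1 + z) + (log (1 + z) - z / (1 + z)) * τ i.succ := by
  rw [Rthru_mul_log_two]
  split_ifs with ht
  · exact mul_log_one_add_div_le (mul_nonneg hγ (hτ 0)) ht hz
  · have ht0 : τ i.succ = 0 := le_antisymm (not_lt.mp ht) (hτ i.succ)
    rw [ht0, mul_zero, add_zero]
    exact div_nonneg (mul_nonneg hγ (hτ 0)) hz.le

lemma Rthru_mul_log_two_eq_of_ratio {z : ℝ} (ht : 0 < τ i.succ) (hz : 0 < 1 + z)
    (hratio : γ i * τ 0 / τ i.succ = z) :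
    Rthru γ i τ * log 2 =
      γ i * τ 0 / (1 + z) + (log (1 + z) - z / (1 + z)) * τ i.succ := by
  have hgs : γ i * τ 0 = z * τ i.succ := by
    rw [← hratio, div_mul_cancel₀ _ ht.ne']
  rw [Rthru_mul_log_two, if_pos ht, hratio, hgs]
  field_simp
  ring

end Throughput

lemma sum_mul_tangent_eq {K : ℕ} {γ lam z : Fin K → ℝ} {μ : ℝ} (hlam : ∀ i, lam i ≠ 0)
    (heq1 : ∀ i, log (1 + z i) - z i / (1 + z i) = (μ / lam i) * log 2)
    (heq2 : ∑ i, lam i * γ i / (1 + z i) = μ * log 2) (τ : Fin (K + 1) → ℝ) :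
    ∑ i, lam i * (γ i * τ 0 / (1 + z i) + (log (1 + z i) - z i / (1 + z i)) * τ i.succ) =
      μ * log 2 * ∑ j, τ j := by
  have hterm : ∀ i, lam i * (γ i * τ 0 / (1 + z i) + (log (1 + z i) - z i / (1 + z i)) * τ i.succ)
      = lam i * γ i / (1 + z i) * τ 0 + μ * log 2 * τ i.succ := by
    intro i
    rw [heq1 i]
    field_simp [hlam i]
  simp only [hterm, Finset.sum_add_distrib, ← Finset.sum_mul, ← Finset.mul_sum, heq2,
    Fin.sum_univ_succ]
  ring

section Allocation

variable {K : ℕ} {γ z : Fin K → ℝ} (hγ : ∀ i, 0 < γ i) (hz : ∀ i, 0 < z i)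
  {τs : Fin (K + 1) → ℝ} (hτ0 : τs 0 = 1 / (1 + ∑ j, γ j / z j))
  (hτi : ∀ i : Fin K, τs i.succ = (γ i / z i) / (1 + ∑ j, γ j / z j))
include hγ hz

lemma one_add_sum_div_pos : 0 < 1 + ∑ j, γ j / z j := by
  have := Finset.sum_nonneg fun j (_ : j ∈ Finset.univ) => (div_pos (hγ j) (hz j)).le
  linarith

include hτi

lemma allocation_succ_pos (i : Fin K) : 0 < τs i.succ := by
  rw [hτi i]
  exact div_pos (div_pos (hγ i) (hz i)) (one_add_sum_div_pos hγ hz)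

include hτ0

lemma allocation_nonneg (j : Fin (K + 1)) : 0 ≤ τs j := by
  refine Fin.cases ?_ (fun i => (allocation_succ_pos hγ hz hτi i).le) j
  rw [hτ0]
  exact (one_div_pos.mpr (one_add_sum_div_pos hγ hz)).le

lemma allocation_sum_eq_one : ∑ j, τs j = 1 := by
  have hS := (one_add_sum_div_pos hγ hz).ne'
  rw [Fin.sum_univ_succ, hτ0, Finset.sum_congr rfl fun i _ => hτi i, ← Finset.sum_div]
  field_simp

lemma allocation_ratio (i : Fin K) : γ i * τs 0 / τs i.succ = z i := by
  have hS := (one_add_sum_div_pos hγ hz).ne'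
  have := (hz i).ne'
  have := (hγ i).ne'
  rw [hτ0, hτi i]
  field_simp

end Allocation

theorem stmt13_general (K : ℕ) (γ : Fin K → ℝ) (hγ : ∀ i, 0 < γ i)
    (lam : Fin K → ℝ) (hlam : ∀ i, 0 < lam i)
    (μ : ℝ) (hμ : 0 < μ) (z : Fin K → ℝ) (hz : ∀ i, 0 < z i)
    (heq1 : ∀ i, Real.log (1 + z i) - z i / (1 + z i) = (μ / lam i) * Real.log 2)
    (heq2 : ∑ i, lam i * γ i / (1 + z i) = μ * Real.log 2)
    (τs : Fin (K + 1) → ℝ)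
    (hτ0 : τs 0 = 1 / (1 + ∑ j, γ j / z j))
    (hτi : ∀ i : Fin K, τs i.succ = (γ i / z i) / (1 + ∑ j, γ j / z j)) :
    τs ∈ Dfeas K ∧
    ∀ τ ∈ Dfeas K, ∑ i, lam i * Rthru γ i τ ≤ ∑ i, lam i * Rthru γ i τs := by
  have hz1 : ∀ i, 0 < 1 + z i := fun i => by linarith [hz i]
  have hτs_sum := allocation_sum_eq_one hγ hz hτ0 hτi
  refine ⟨⟨allocation_nonneg hγ hz hτ0 hτi, hτs_sum.le⟩, fun τ ⟨hτ, hτ_sum⟩ => ?_⟩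
  have hlam_ne : ∀ i, lam i ≠ 0 := fun i => (hlam i).ne'
  have hupper : (∑ i, lam i * Rthru γ i τ) * log 2 ≤ μ * log 2 * ∑ j, τ j := by
    rw [Finset.sum_mul, ← sum_mul_tangent_eq hlam_ne heq1 heq2]
    refine Finset.sum_le_sum fun i _ => ?_
    rw [mul_assoc]
    exact mul_le_mul_of_nonneg_left
      (Rthru_mul_log_two_le (hγ i).le hτ (hz1 i)) (hlam i).le
  have hopt : (∑ i, lam i * Rthru γ i τs) * log 2 = μ * log 2 * ∑ j, τs j := by
    rw [Finset.sum_mul, ← sum_mul_tangent_eq hlam_ne heq1 heq2]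
    refine Finset.sum_congr rfl fun i _ => ?_
    rw [mul_assoc, Rthru_mul_log_two_eq_of_ratio (allocation_succ_pos hγ hz hτi i) (hz1 i)
      (allocation_ratio hγ hz hτ0 hτi i)]
  have hlog2 : 0 < log 2 := log_pos one_lt_two
  refine le_of_mul_le_mul_right ?_ hlog2
  calc (∑ i, lam i * Rthru γ i τ) * log 2 ≤ μ * log 2 * ∑ j, τ j := hupper
    _ ≤ μ * log 2 * ∑ j, τs j := by
        rw [hτs_sum]; exact mul_le_mul_of_nonneg_left hτ_sum (by positivity)
    _ = _ := hopt.symm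

/-- If `μ > 0` and `z_1,…,z_K > 0` satisfy the KKT system
`ln(1+z_i) − z_i/(1+z_i) = (μ/λ_i) ln 2` and `Σ λ_i γ_i/(1+z_i) = μ ln 2`, then the
allocation `τ_0* = 1/(1 + Σ γ_j/z_j)`, `τ_i* = (γ_i/z_i)/(1 + Σ γ_j/z_j)` is feasible
and maximizes the weighted sum-throughput `Σ λ_i R_i(τ)` over `D`. -/
theorem stmt13 (K : ℕ) (hK : 1 ≤ K) (γ : Fin K → ℝ) (hγ : ∀ i, 0 < γ i)
    (lam : Fin K → ℝ) (hlam : ∀ i, 0 < lam i)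
    (μ : ℝ) (hμ : 0 < μ) (z : Fin K → ℝ) (hz : ∀ i, 0 < z i)
    (heq1 : ∀ i, Real.log (1 + z i) - z i / (1 + z i) = (μ / lam i) * Real.log 2)
    (heq2 : ∑ i, lam i * γ i / (1 + z i) = μ * Real.log 2)
    (τs : Fin (K + 1) → ℝ)
    (hτ0 : τs 0 = 1 / (1 + ∑ j, γ j / z j))
    (hτi : ∀ i : Fin K, τs i.succ = (γ i / z i) / (1 + ∑ j, γ j / z j)) :
    τs ∈ Dfeas K ∧
    ∀ τ ∈ Dfeas K, ∑ i, lam i * Rthru γ i τ ≤ ∑ i, lam i * Rthru γ i τs :=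
  stmt13_general K γ hγ lam hlam μ hμ z hz heq1 heq2 τs hτ0 hτi
end
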